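/- arXiv:1610.05394 — 7 statements merged into one kernel-verified Lean document; each statement's English description precedes it below -/
import Mathlib

section
/- If a cascaded sensor selection instance satisfies strong dominance, then for all indices i ≤ j the marginal error equals the disagreement probability: γ_i − γ_j = P(Y^i ≠ Y^j). -/
open MeasureTheory

/-- Error probability `γ_k = P(Y^k ≠ Y)` of sensor `k`. -/
noncomputable def gam {Ω : Type} [MeasurableSpace Ω] (μ : Measure Ω) {K : ℕ}
    (Y : Ω → Bool) (S : Fin K → Ω → Bool) (k : Fin K) : ℝ :=
  (μ {ω | S k ω ≠ Y ω}).toReal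

/-- Disagreement probability `P(Y^i ≠ Y^j)` between sensors `i` and `j`. -/
noncomputable def dis {Ω : Type} [MeasurableSpace Ω] (μ : Measure Ω) {K : ℕ}
    (S : Fin K → Ω → Bool) (i j : Fin K) : ℝ :=
  (μ {ω | S i ω ≠ S j ω}).toReal

/-- Cumulative cost `C_k = c_1 + ⋯ + c_k`. -/
noncomputable def cumCost {K : ℕ} (c : Fin K → ℝ) (k : Fin K) : ℝ :=
  ∑ i ∈ Finset.univ.filter (fun i : Fin K => i ≤ k), c i

/-!
Since labels are binary, two outputs that are both wrong agree. So under strong dominance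
the event that sensor `i` errs splits, up to a null set, into the disjoint events
"sensors `i` and `j` disagree" (then `i` is wrong and `j` right) and "sensor `j` errs"
(then `i` errs as well and agrees with `j`). Taking probabilities gives `γ_i = P(Y^i ≠ Y^j) + γ_j`.
-/

theorem Bool.ne_iff_ne_or_ne_of_imp {a b y : Bool} (h : a = y → b = y) :
    a ≠ y ↔ a ≠ b ∨ b ≠ y := by
  revert a b y; decide

theorem Bool.eq_of_ne_of_ne {a b y : Bool} (hab : a ≠ b) (hby : b ≠ y) : a = y := by
  revert a b y; decide

theorem measure_ne_eq_add_of_ae_imp {Ω : Type*} [MeasurableSpace Ω] {μ : Measure Ω}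
    {a b y : Ω → Bool} (hab : NullMeasurableSet {ω | a ω ≠ b ω} μ)
    (h : ∀ᵐ ω ∂μ, a ω = y ω → b ω = y ω) :
    μ {ω | a ω ≠ y ω} = μ {ω | a ω ≠ b ω} + μ {ω | b ω ≠ y ω} := by
  have hunion : {ω | a ω ≠ y ω} =ᵐ[μ] ({ω | a ω ≠ b ω} ∪ {ω | b ω ≠ y ω} : Set Ω) := by
    filter_upwards [h] with ω hω
    exact propext (Bool.ne_iff_ne_or_ne_of_imp hω)
  have hdisj : AEDisjoint μ {ω | a ω ≠ b ω} {ω | b ω ≠ y ω} :=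
    measure_mono_null (t := {ω | ¬(a ω = y ω → b ω = y ω)})
      (fun ω ⟨hne, hby⟩ himp => hby (himp (Bool.eq_of_ne_of_ne hne hby))) (ae_iff.mp h)
  rw [measure_congr hunion, measure_union₀' hab hdisj]

theorem strong_dominance_gamma_diff_eq_disagreement_general
    {Ω : Type} [MeasurableSpace Ω] (μ : Measure Ω) [IsProbabilityMeasure μ]
    {K : ℕ} (Y : Ω → Bool) (S : Fin K → Ω → Bool)
    (hS : ∀ k, Measurable (S k))
    (hSD : ∀ i j : Fin K, i ≤ j → ∀ᵐ ω ∂μ, S i ω = Y ω → S j ω = Y ω) :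
    ∀ i j : Fin K, i ≤ j → gam μ Y S i - gam μ Y S j = dis μ S i j := by
  intro i j hij
  have hdis : NullMeasurableSet {ω | S i ω ≠ S j ω} μ :=
    (measurableSet_eq_fun (hS i) (hS j)).compl.nullMeasurableSet
  have hsplit := measure_ne_eq_add_of_ae_imp hdis (hSD i j hij)
  rw [gam, gam, dis, hsplit, ENNReal.toReal_add (measure_ne_top _ _) (measure_ne_top _ _)]
  ring

/-- Under strong dominance, for all `i ≤ j` the marginal error equals
the disagreement probability: `γ_i − γ_j = P(Y^i ≠ Y^j)`. -/
theorem strong_dominance_gamma_diff_eq_disagreement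
    {Ω : Type} [MeasurableSpace Ω] (μ : Measure Ω) [IsProbabilityMeasure μ]
    {K : ℕ} (Y : Ω → Bool) (S : Fin K → Ω → Bool)
    (hY : Measurable Y) (hS : ∀ k, Measurable (S k))
    (c : Fin K → ℝ) (hc : ∀ k, 0 ≤ c k)
    (hmono : ∀ i j : Fin K, i ≤ j → gam μ Y S j ≤ gam μ Y S i)
    (hSD : ∀ i j : Fin K, i ≤ j → ∀ᵐ ω ∂μ, S i ω = Y ω → S j ω = Y ω) :
    ∀ i j : Fin K, i ≤ j → gam μ Y S i - gam μ Y S j = dis μ S i j :=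
  strong_dominance_gamma_diff_eq_disagreement_general μ Y S hS hSD
end

section
/- Every cascaded sensor selection instance satisfying strong dominance also satisfies weak dominance; that is, Θ_SD ⊆ Θ_WD. -/
open MeasureTheory

/-- Every cascaded sensor selection instance satisfying strong dominance
also satisfies weak dominance: with `i* ` the smallest optimal action,
`C_j − C_{i*} ≥ P(Y^{i*} ≠ Y^j)` for all `j > i*`. -/
theorem strong_dominance_implies_weak_dominance
    {Ω : Type} [MeasurableSpace Ω] (μ : Measure Ω) [IsProbabilityMeasure μ]
    {K : ℕ} (Y : Ω → Bool) (S : Fin K → Ω → Bool)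
    (hY : Measurable Y) (hS : ∀ k, Measurable (S k))
    (c : Fin K → ℝ) (hc : ∀ k, 0 ≤ c k)
    (hmono : ∀ i j : Fin K, i ≤ j → gam μ Y S j ≤ gam μ Y S i)
    (hSD : ∀ i j : Fin K, i ≤ j → ∀ᵐ ω ∂μ, S i ω = Y ω → S j ω = Y ω)
    (istar : Fin K)
    (hopt : ∀ k, gam μ Y S istar + cumCost c istar ≤ gam μ Y S k + cumCost c k)
    (hsmall : ∀ k, (∀ k', gam μ Y S k + cumCost c k ≤ gam μ Y S k' + cumCost c k') →
      istar ≤ k) :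
    ∀ j, istar < j → cumCost c j - cumCost c istar ≥ dis μ S istar j := by
  intro j hj
  have hSDij := hSD istar j hj.le
  set N : Set Ω := {ω | ¬ (S istar ω = Y ω → S j ω = Y ω)} with hN
  have hμN : μ N = 0 := by
    rw [← MeasureTheory.ae_iff] at *
    exact hSDij
  set A : Set Ω := {ω | S istar ω ≠ Y ω}
  set B : Set Ω := {ω | S j ω ≠ Y ω}
  set D : Set Ω := {ω | S istar ω ≠ S j ω}
  have hBmeas : MeasurableSet B := by
    have : B = (fun ω => (S j ω, Y ω)) ⁻¹' {p : Bool × Bool | p.1 ≠ p.2} := rfl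
    rw [this]
    exact ((hS j).prodMk hY) (by measurability)
  have hsub : D ∪ B ⊆ A ∪ N := by
    intro ω hω
    by_cases h : S istar ω = Y ω → S j ω = Y ω
    · left
      rcases hω with hω | hω
      · intro hA; exact hω ((h hA).symm ▸ hA)
      · intro hA; exact hω (h hA)
    · right; exact h
  have hint : D ∩ B ⊆ N := by
    rintro ω ⟨hD, hB⟩
    intro h
    have hD' : S istar ω ≠ S j ω := hD
    have hB' : S j ω ≠ Y ω := hB
    have h2 : S istar ω = Y ω := by
      cases hsi : S istar ω <;> cases hy : Y ω <;> cases hsj : S j ω <;> simp_all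
    exact hB' (h h2)
  have key : μ D + μ B ≤ μ A := by
    have e1 : μ (D ∪ B) + μ (D ∩ B) = μ D + μ B :=
      measure_union_add_inter D hBmeas
    have e2 : μ (D ∪ B) ≤ μ A := by
      calc μ (D ∪ B) ≤ μ (A ∪ N) := measure_mono hsub
        _ ≤ μ A + μ N := measure_union_le _ _
        _ = μ A := by rw [hμN, add_zero]
    have e3 : μ (D ∩ B) = 0 := measure_mono_null hint hμN
    calc μ D + μ B = μ (D ∪ B) + μ (D ∩ B) := e1.symm
      _ = μ (D ∪ B) := by rw [e3, add_zero]
      _ ≤ μ A := e2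
  have hfin : ∀ s : Set Ω, μ s ≠ ⊤ := fun s => (measure_lt_top μ s).ne
  have keyR : (μ D).toReal + (μ B).toReal ≤ (μ A).toReal := by
    rw [← ENNReal.toReal_add (hfin D) (hfin B)]
    exact ENNReal.toReal_mono (hfin A) key
  have hoptj := hopt j
  have hd : dis μ S istar j = (μ D).toReal := rfl
  have hga : gam μ Y S istar = (μ A).toReal := rfl
  have hgb : gam μ Y S j = (μ B).toReal := rfl
  simp only [ge_iff_le]
  linarith
end

section
/- If a cascaded sensor selection instance satisfies weak dominance, then the smallest optimal action i = a* satisfies both conditions (wd1) and (wd2): for all j < i, C_i − C_j < P(Y^i ≠ Y^j), and for all j > i, C_j − C_i ≥ P(Y^i ≠ Y^j). In particular the action selector a_wd is well-defined on such instances. -/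
open MeasureTheory

/-- Index `i` satisfies conditions (wd1)–(wd2):
(wd1) for all `j < i`, `C_i − C_j < P(Y^i ≠ Y^j)`, and
(wd2) for all `j > i`, `C_j − C_i ≥ P(Y^i ≠ Y^j)`.
The action selector `a_wd` returns the smallest such index, when one exists. -/
def wdIdx {Ω : Type} [MeasurableSpace Ω] (μ : Measure Ω) {K : ℕ}
    (S : Fin K → Ω → Bool) (c : Fin K → ℝ) (i : Fin K) : Prop :=
  (∀ j, j < i → cumCost c i - cumCost c j < dis μ S i j) ∧
  (∀ j, i < j → cumCost c j - cumCost c i ≥ dis μ S i j)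

/-- Under weak dominance, the smallest optimal action `i*` satisfies
both (wd1) and (wd2); in particular `a_wd` is well-defined on such instances. -/
theorem weak_dominance_awd_well_defined
    {Ω : Type} [MeasurableSpace Ω] (μ : Measure Ω) [IsProbabilityMeasure μ]
    {K : ℕ} (Y : Ω → Bool) (S : Fin K → Ω → Bool)
    (hY : Measurable Y) (hS : ∀ k, Measurable (S k))
    (c : Fin K → ℝ) (hc : ∀ k, 0 ≤ c k)
    (hmono : ∀ i j : Fin K, i ≤ j → gam μ Y S j ≤ gam μ Y S i)
    (istar : Fin K)
    (hopt : ∀ k, gam μ Y S istar + cumCost c istar ≤ gam μ Y S k + cumCost c k)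
    (hsmall : ∀ k, (∀ k', gam μ Y S k + cumCost c k ≤ gam μ Y S k' + cumCost c k') →
      istar ≤ k)
    (hWD : ∀ j, istar < j → cumCost c j - cumCost c istar ≥ dis μ S istar j) :
    wdIdx μ S c istar := by
  refine ⟨fun j hj => ?_, fun j hj => hWD j hj⟩
  -- j < istar, so j is not optimal, giving a strict inequality
  have hnotopt : ∃ k', gam μ Y S k' + cumCost c k' < gam μ Y S j + cumCost c j := by
    by_contra h
    push_neg at h
    exact absurd (hsmall j (fun k' => h k')) (not_le.mpr hj)
  obtain ⟨k', hk'⟩ := hnotopt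
  have hstrict : gam μ Y S istar + cumCost c istar < gam μ Y S j + cumCost c j :=
    lt_of_le_of_lt (hopt k') hk'
  -- triangle inequality: γ_j ≤ dis(istar,j) + γ_istar
  have hsub : {ω | S j ω ≠ Y ω} ⊆ {ω | S istar ω ≠ S j ω} ∪ {ω | S istar ω ≠ Y ω} := by
    intro ω hω
    by_cases h : S istar ω = S j ω
    · right; simpa [h] using hω
    · left; exact h
  have h1 : μ {ω | S j ω ≠ Y ω} ≤
      μ {ω | S istar ω ≠ S j ω} + μ {ω | S istar ω ≠ Y ω} :=
    le_trans (measure_mono hsub) (measure_union_le _ _)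
  have htri : gam μ Y S j ≤ dis μ S istar j + gam μ Y S istar := by
    unfold gam dis
    rw [← ENNReal.toReal_add (measure_ne_top μ _) (measure_ne_top μ _)]
    exact ENNReal.toReal_mono (ENNReal.add_ne_top.mpr ⟨measure_ne_top μ _, measure_ne_top μ _⟩) h1
  linarith
end

section
/- If a cascaded sensor selection instance satisfies weak dominance and an index i ∈ {1,…,K} satisfies conditions (wd1) and (wd2), then i equals the smallest optimal action a*. In particular a_wd is sound: a_wd applied to the instance returns a*. -/
open MeasureTheory

lemma dis_symm {Ω : Type} [MeasurableSpace Ω] (μ : Measure Ω) {K : ℕ}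
    (S : Fin K → Ω → Bool) (i j : Fin K) : dis μ S i j = dis μ S j i := by
  have : {ω | S i ω ≠ S j ω} = {ω | S j ω ≠ S i ω} := by
    ext ω; simp [ne_comm]
  unfold dis
  rw [this]

lemma gam_le_gam_add_dis {Ω : Type} [MeasurableSpace Ω] (μ : Measure Ω)
    [IsProbabilityMeasure μ] {K : ℕ}
    (Y : Ω → Bool) (S : Fin K → Ω → Bool) (i k : Fin K) :
    gam μ Y S i ≤ gam μ Y S k + dis μ S i k := by
  have hsub : {ω | S i ω ≠ Y ω} ⊆ {ω | S k ω ≠ Y ω} ∪ {ω | S i ω ≠ S k ω} := by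
    intro ω hω
    by_cases h : S k ω = Y ω
    · right
      intro he
      exact hω (he.trans h)
    · left; exact h
  have h1 : μ {ω | S i ω ≠ Y ω} ≤ μ {ω | S k ω ≠ Y ω} + μ {ω | S i ω ≠ S k ω} :=
    le_trans (measure_mono hsub) (measure_union_le _ _)
  unfold gam dis
  have h2 := ENNReal.toReal_mono
    (ENNReal.add_ne_top.mpr ⟨measure_ne_top μ _, measure_ne_top μ _⟩) h1
  rwa [ENNReal.toReal_add (measure_ne_top μ _) (measure_ne_top μ _)] at h2

/-- Under weak dominance, any index `i` satisfying (wd1)–(wd2) equals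
the smallest optimal action `i*`; in particular `a_wd` is sound and returns `a*`. -/
theorem weak_dominance_awd_sound
    {Ω : Type} [MeasurableSpace Ω] (μ : Measure Ω) [IsProbabilityMeasure μ]
    {K : ℕ} (Y : Ω → Bool) (S : Fin K → Ω → Bool)
    (hY : Measurable Y) (hS : ∀ k, Measurable (S k))
    (c : Fin K → ℝ) (hc : ∀ k, 0 ≤ c k)
    (hmono : ∀ i j : Fin K, i ≤ j → gam μ Y S j ≤ gam μ Y S i)
    (istar : Fin K)
    (hopt : ∀ k, gam μ Y S istar + cumCost c istar ≤ gam μ Y S k + cumCost c k)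
    (hsmall : ∀ k, (∀ k', gam μ Y S k + cumCost c k ≤ gam μ Y S k' + cumCost c k') →
      istar ≤ k)
    (hWD : ∀ j, istar < j → cumCost c j - cumCost c istar ≥ dis μ S istar j)
    (i : Fin K) (hi : wdIdx μ S c i) :
    i = istar := by
  rcases lt_trichotomy i istar with h | h | h
  · exfalso
    have histar : gam μ Y S i + cumCost c i ≤ gam μ Y S istar + cumCost c istar := by
      have h1 := hi.2 istar h
      have h2 := gam_le_gam_add_dis μ Y S i istar
      linarith
    have key : ∀ k, gam μ Y S i + cumCost c i ≤ gam μ Y S k + cumCost c k := by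
      intro k
      rcases lt_trichotomy i k with hk | hk | hk
      · have h1 := hi.2 k hk
        have h2 := gam_le_gam_add_dis μ Y S i k
        linarith
      · rw [hk]
      · have := hopt k
        linarith
    exact absurd (hsmall i key) (not_le.mpr h)
  · exact h
  · exfalso
    have h1 := hi.1 istar h
    have h2 := hWD i h
    rw [dis_symm μ S istar i] at h2
    linarith
end

section
/- Fix K ≥ 2 and costs c_1, …, c_K > 0, and let a be any action-selector map (a function from probability distributions on {0,1}^K to {1,…,K}) that is sound over Θ_WD. Then for every sensor-output distribution P_S that arises from some instance in Θ_WD (i.e., P_S is the law of (Y^1,…,Y^K) for some weakly dominant instance), a(P_S) = a_wd(P_S). -/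
open MeasureTheory

/-- A USS instance is a joint law `P` of `(Y, Y^1, …, Y^K)` on `{0,1}^{K+1}`;
`gamP P k = P(Y^k ≠ Y)` is the error rate of sensor `k`. -/
noncomputable def gamP {K : ℕ} (P : Measure (Bool × (Fin K → Bool))) (k : Fin K) : ℝ :=
  (P {p | p.2 k ≠ p.1}).toReal

/-- Disagreement probability `P(Y^i ≠ Y^j)` under the joint law. -/
noncomputable def disP {K : ℕ} (P : Measure (Bool × (Fin K → Bool))) (i j : Fin K) : ℝ :=
  (P {p | p.2 i ≠ p.2 j}).toReal

/-- Disagreement probability determined by the sensor-output law `P_S`. -/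
noncomputable def disS {K : ℕ} (PS : Measure (Fin K → Bool)) (i j : Fin K) : ℝ :=
  (PS {s | s i ≠ s j}).toReal

/-- Index `i` satisfies conditions (wd1)–(wd2) for the sensor-output law `P_S`:
(wd1) for all `j < i`, `C_i − C_j < P(Y^i ≠ Y^j)`, and
(wd2) for all `j > i`, `C_j − C_i ≥ P(Y^i ≠ Y^j)`.
The action selector `a_wd` maps `P_S` to the smallest such index, when one exists. -/
def wdIdxS {K : ℕ} (c : Fin K → ℝ) (PS : Measure (Fin K → Bool)) (i : Fin K) : Prop :=
  (∀ j, j < i → cumCost c i - cumCost c j < disS PS i j) ∧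
  (∀ j, i < j → cumCost c j - cumCost c i ≥ disS PS i j)

/-- A valid cascaded sensor selection instance: `P` is a probability law and the error
rates `γ_1 ≥ γ_2 ≥ ⋯ ≥ γ_K` are decreasing. -/
def ValidUSS {K : ℕ} (P : Measure (Bool × (Fin K → Bool))) : Prop :=
  IsProbabilityMeasure P ∧ ∀ i j : Fin K, i ≤ j → gamP P j ≤ gamP P i

/-- The instance `P` (with costs `c`) lies in `Θ_WD`: it is a valid instance and, with
`i* = a*` its smallest optimal action, `C_j − C_{i*} ≥ P(Y^{i*} ≠ Y^j)` for all `j > i*`. -/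
def InWD {K : ℕ} (c : Fin K → ℝ) (P : Measure (Bool × (Fin K → Bool))) : Prop :=
  ValidUSS P ∧ ∃ istar : Fin K,
    (∀ k, gamP P istar + cumCost c istar ≤ gamP P k + cumCost c k) ∧
    (∀ k, (∀ k', gamP P k + cumCost c k ≤ gamP P k' + cumCost c k') → istar ≤ k) ∧
    (∀ j, istar < j → cumCost c j - cumCost c istar ≥ disP P istar j)

section Aux

open ENNReal

variable {K : ℕ}

lemma measSet_gam (k : Fin K) :
    MeasurableSet {p : Bool × (Fin K → Bool) | p.2 k ≠ p.1} := by measurability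

lemma measSet_dis (i j : Fin K) :
    MeasurableSet {p : Bool × (Fin K → Bool) | p.2 i ≠ p.2 j} := by measurability

lemma measSet_disS (i j : Fin K) :
    MeasurableSet {s : Fin K → Bool | s i ≠ s j} := by measurability

lemma gamP_nonneg (P : Measure (Bool × (Fin K → Bool))) (k : Fin K) : 0 ≤ gamP P k :=
  ENNReal.toReal_nonneg

lemma gamP_le_one (P : Measure (Bool × (Fin K → Bool))) [IsProbabilityMeasure P] (k : Fin K) :
    gamP P k ≤ 1 := by
  have := prob_le_one (μ := P) (s := {p | p.2 k ≠ p.1})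
  simpa [gamP] using ENNReal.toReal_le_of_le_ofReal zero_le_one (by simpa using this)

lemma disS_map (P : Measure (Bool × (Fin K → Bool))) (i j : Fin K) :
    disS (P.map Prod.snd) i j = disP P i j := by
  simp only [disS, disP, Measure.map_apply measurable_snd (measSet_disS i j)]
  rfl

lemma disP_symm (P : Measure (Bool × (Fin K → Bool))) (i j : Fin K) :
    disP P i j = disP P j i := by
  have h : {p : Bool × (Fin K → Bool) | p.2 i ≠ p.2 j} = {p | p.2 j ≠ p.2 i} := by
    ext p; exact ne_comm
  simp only [disP, h]

lemma gam_tri (P : Measure (Bool × (Fin K → Bool))) [IsProbabilityMeasure P] (a b : Fin K) :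
    gamP P a ≤ gamP P b + disP P b a := by
  have hsub : {p : Bool × (Fin K → Bool) | p.2 a ≠ p.1} ⊆
      {p | p.2 b ≠ p.1} ∪ {p | p.2 b ≠ p.2 a} := by
    intro p hp
    simp only [Set.mem_union, Set.mem_setOf_eq]
    by_contra h
    push_neg at h
    exact hp (h.2.symm.trans h.1)
  have h1 : P {p | p.2 a ≠ p.1} ≤ P {p | p.2 b ≠ p.1} + P {p | p.2 b ≠ p.2 a} :=
    (measure_mono hsub).trans (measure_union_le _ _)
  have h2 : P {p | p.2 b ≠ p.1} + P {p | p.2 b ≠ p.2 a} ≠ ⊤ :=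
    ENNReal.add_ne_top.mpr ⟨measure_ne_top _ _, measure_ne_top _ _⟩
  have := ENNReal.toReal_mono h2 h1
  rwa [ENNReal.toReal_add (measure_ne_top _ _) (measure_ne_top _ _)] at this

lemma cumCost_strictMono (c : Fin K → ℝ) (hc : ∀ k, 0 < c k) {j k : Fin K} (h : j < k) :
    cumCost c j < cumCost c k := by
  apply Finset.sum_lt_sum_of_subset
  · intro x hx
    simp only [Finset.mem_filter, Finset.mem_univ, true_and] at *
    exact hx.trans h.le
  · exact Finset.mem_filter.mpr ⟨Finset.mem_univ k, le_refl k⟩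
  · simp only [Finset.mem_filter, Finset.mem_univ, true_and]
    exact not_le.mpr h
  · exact hc k
  · intro x _ _
    exact (hc x).le

end Aux

/-- Any action-selector map `a` (from distributions on `{0,1}^K` to
actions) that is sound over `Θ_WD` agrees with `a_wd` on every sensor-output law arising
from an instance of `Θ_WD`. -/
theorem sound_selector_eq_awd_on_WD
    {K : ℕ} (hK : 2 ≤ K) (c : Fin K → ℝ) (hc : ∀ k, 0 < c k)
    (a : Measure (Fin K → Bool) → Fin K)
    (hsound : ∀ P : Measure (Bool × (Fin K → Bool)), InWD c P →
      ∀ k, gamP P (a (P.map Prod.snd)) + cumCost c (a (P.map Prod.snd)) ≤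
        gamP P k + cumCost c k)
    (P : Measure (Bool × (Fin K → Bool))) (hP : InWD c P)
    (i : Fin K) (hi : wdIdxS c (P.map Prod.snd) i)
    (hleast : ∀ i', wdIdxS c (P.map Prod.snd) i' → i ≤ i') :
    a (P.map Prod.snd) = i := by
  classical
  obtain ⟨⟨hPprob, hmono⟩, istar, hopt, hlst, hwd⟩ := hP
  obtain ⟨hi1, hi2⟩ := hi
  haveI := hPprob
  have hdis : ∀ i' j', disS (P.map Prod.snd) i' j' = disP P i' j' := disS_map P
  -- `istar` satisfies (wd1)-(wd2), hence `i ≤ istar`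
  have histar : wdIdxS c (P.map Prod.snd) istar := by
    constructor
    · intro j hj
      have hjno : ¬ (∀ k', gamP P j + cumCost c j ≤ gamP P k' + cumCost c k') :=
        fun h => absurd (hlst j h) (not_le.mpr hj)
      push_neg at hjno
      obtain ⟨k', hk'⟩ := hjno
      have h1 : gamP P istar + cumCost c istar < gamP P j + cumCost c j :=
        (hopt k').trans_lt hk'
      have h2 := gam_tri P j istar
      rw [hdis]
      linarith
    · intro j hj
      rw [hdis]
      exact hwd j hj
  have hii : i ≤ istar := hleast istar histar
  -- in fact `i = istar`
  have hieq : i = istar := by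
    rcases eq_or_lt_of_le hii with h | h
    · exact h
    · exfalso
      have h2 := hi2 istar h
      rw [hdis, disP_symm] at h2
      have h3 := gam_tri P i istar
      have hoptI : ∀ k', gamP P i + cumCost c i ≤ gamP P k' + cumCost c k' := by
        intro k'
        have := hopt k'
        linarith
      exact absurd (hlst i hoptI) (not_le.mpr h)
  rw [← hieq] at hopt hlst hwd
  -- strict suboptimality of every `k < i`
  have hstrict : ∀ k, k < i → gamP P i + cumCost c i < gamP P k + cumCost c k := by
    intro k hk
    have hkno : ¬ (∀ k', gamP P k + cumCost c k ≤ gamP P k' + cumCost c k') :=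
      fun h => absurd (hlst k h) (not_le.mpr hk)
    push_neg at hkno
    obtain ⟨k', hk'⟩ := hkno
    exact (hopt k').trans_lt hk'
  -- choose a small flipping probability `t`
  haveI hne : Nonempty (Fin K) := ⟨⟨0, by omega⟩⟩
  set Δ : Fin K → ℝ := fun k => gamP P k + cumCost c k - (gamP P i + cumCost c i) with hΔ
  set δ : ℝ := Finset.univ.inf' Finset.univ_nonempty (fun k => if k < i then Δ k else 1) with hδ
  have hδpos : 0 < δ := by
    rw [hδ, Finset.lt_inf'_iff]
    intro b _
    split
    · have := hstrict b (by assumption)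
      simp only [hΔ]
      linarith
    · norm_num
  have hδle : ∀ k, k < i → δ ≤ Δ k := by
    intro k hk
    have h := Finset.inf'_le (fun k => if k < i then Δ k else 1) (Finset.mem_univ k)
    rw [if_pos hk] at h
    exact h
  set t : ℝ := min (1/2) (δ/4) with ht
  have ht0 : 0 < t := lt_min (by norm_num) (by linarith)
  have ht2 : t ≤ 1/2 := min_le_left _ _
  have htΔ : ∀ k, k < i → 2*t < Δ k := by
    intro k hk
    have h1 := hδle k hk
    have h2 : t ≤ δ/4 := min_le_right _ _
    linarith
  have ht1 : (0:ℝ) ≤ 1 - t := by linarith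
  -- the flipped instance and the mixture Q
  have hflip : Measurable (fun p : Bool × (Fin K → Bool) => (!p.1, p.2)) := by measurability
  set P' := P.map (fun p : Bool × (Fin K → Bool) => (!p.1, p.2)) with hP'
  haveI hP'prob : IsProbabilityMeasure P' := Measure.isProbabilityMeasure_map hflip.aemeasurable
  set Q : Measure (Bool × (Fin K → Bool)) :=
    ENNReal.ofReal (1-t) • P + ENNReal.ofReal t • P' with hQ
  have hQapp : ∀ s, Q s = ENNReal.ofReal (1-t) * P s + ENNReal.ofReal t * P' s := by
    intro s
    simp [hQ, Measure.add_apply, Measure.smul_apply, smul_eq_mul]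
  have hofadd : ENNReal.ofReal (1-t) + ENNReal.ofReal t = 1 := by
    rw [← ENNReal.ofReal_add ht1 ht0.le]
    norm_num
  haveI hQprob : IsProbabilityMeasure Q := by
    constructor
    rw [hQapp]
    simp only [measure_univ, mul_one]
    exact hofadd
  -- error rates of Q
  have hgamQ : ∀ k, gamP Q k = (1 - 2*t) * gamP P k + t := by
    intro k
    have hpre : (fun p : Bool × (Fin K → Bool) => (!p.1, p.2)) ⁻¹' {p | p.2 k ≠ p.1}
        = {p : Bool × (Fin K → Bool) | p.2 k ≠ p.1}ᶜ := by
      ext ⟨y, s⟩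
      simp only [Set.mem_preimage, Set.mem_compl_iff, Set.mem_setOf_eq]
      cases y <;> cases hs : s k <;> simp
    have h1 : P' {p | p.2 k ≠ p.1} = 1 - P {p | p.2 k ≠ p.1} := by
      rw [hP', Measure.map_apply hflip (measSet_gam k), hpre,
        prob_compl_eq_one_sub (measSet_gam k)]
    simp only [gamP, hQapp, h1]
    rw [ENNReal.toReal_add (ENNReal.mul_ne_top ENNReal.ofReal_ne_top (measure_ne_top _ _))
        (ENNReal.mul_ne_top ENNReal.ofReal_ne_top (ENNReal.sub_ne_top ENNReal.one_ne_top)),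
      ENNReal.toReal_mul, ENNReal.toReal_mul, ENNReal.toReal_ofReal ht1,
      ENNReal.toReal_ofReal ht0.le,
      ENNReal.toReal_sub_of_le prob_le_one ENNReal.one_ne_top, ENNReal.toReal_one]
    ring
  -- disagreement probabilities of Q
  have hdisQ : ∀ i' j', disP Q i' j' = disP P i' j' := by
    intro i' j'
    have h1 : P' {p | p.2 i' ≠ p.2 j'} = P {p | p.2 i' ≠ p.2 j'} := by
      rw [hP', Measure.map_apply hflip (measSet_dis i' j')]
      rfl
    simp only [disP, hQapp, h1, ← add_mul, hofadd, one_mul]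
  -- Q has the same sensor-output law
  have hmapQ : Q.map Prod.snd = P.map Prod.snd := by
    rw [hQ, Measure.map_add _ _ measurable_snd, Measure.map_smul, Measure.map_smul, hP',
      Measure.map_map measurable_snd hflip]
    have hcomp : (Prod.snd ∘ fun p : Bool × (Fin K → Bool) => (!p.1, p.2)) = Prod.snd := rfl
    rw [hcomp, ← add_smul, hofadd, one_smul]
  -- i is the unique optimal action of Q
  have hQval : ∀ k, k ≠ i → gamP Q i + cumCost c i < gamP Q k + cumCost c k := by
    intro k hk
    rw [hgamQ, hgamQ]
    have hg1k := gamP_le_one P k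
    have hg0k := gamP_nonneg P k
    have hg1i := gamP_le_one P i
    have hg0i := gamP_nonneg P i
    rcases lt_or_gt_of_ne hk with h | h
    · have h1 := htΔ k h
      simp only [hΔ] at h1
      nlinarith [mul_nonneg ht0.le (by linarith : (0:ℝ) ≤ 1 - gamP P k + gamP P i)]
    · have hCk := cumCost_strictMono c hc h
      have hγ := hmono i k h.le
      have hΔk := hopt k
      rcases eq_or_lt_of_le hγ with he | hl
      · rw [he]
        linarith
      · nlinarith [mul_pos ht0 (sub_pos.mpr hl)]
  -- Q lies in Θ_WD
  have hQWD : InWD c Q := by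
    refine ⟨⟨hQprob, ?_⟩, i, ?_, ?_, ?_⟩
    · intro j k hjk
      rw [hgamQ, hgamQ]
      have h1 := hmono j k hjk
      nlinarith [mul_nonneg (by linarith : (0:ℝ) ≤ 1 - 2*t) (sub_nonneg.mpr h1)]
    · intro k
      rcases eq_or_ne k i with rfl | h
      · exact le_refl _
      · exact (hQval k h).le
    · intro k hko
      rcases eq_or_ne k i with rfl | h
      · exact le_refl _
      · exact absurd (hko i) (not_le.mpr (hQval k h))
    · intro j hj
      rw [hdisQ]
      have h2 := hi2 j hj
      rwa [hdis] at h2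
  -- conclude via soundness on Q
  have hs := hsound Q hQWD
  rw [hmapQ] at hs
  by_contra hne
  have h1 := hQval (a (P.map Prod.snd)) hne
  have h2 := hs i
  linarith
end

section
/- Let K = 2 and fix costs c_1 ≥ 0, c_2 > 0 with C_2 − C_1 = 1/4. For every ε with 0 < ε < 3/8 there exist two cascaded sensor selection instances θ and θ' (joint laws of (Y, Y^1, Y^2) on {0,1}^3 with γ_2 ≤ γ_1), both satisfying weak dominance, such that: (i) in θ, action 1 is the unique optimal action and (γ_2(θ) + C_2) − (γ_1(θ) + C_1) = 1/4; (ii) in θ', action 2 is the unique optimal action and (γ_1(θ') + C_1) − (γ_2(θ') + C_2) = ε; and (iii) the marginal laws of (Y^1, Y^2) under θ and θ' differ by at most ε on every point of {0,1}^2. -/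
open MeasureTheory

/-- `γ_1 = P(Y^1 ≠ Y)` for a joint law of `(Y, Y^1, Y^2)` on `{0,1}^3`. -/
noncomputable def g1 (θ : Measure (Bool × Bool × Bool)) : ℝ :=
  (θ {p | p.2.1 ≠ p.1}).toReal

/-- `γ_2 = P(Y^2 ≠ Y)`. -/
noncomputable def g2 (θ : Measure (Bool × Bool × Bool)) : ℝ :=
  (θ {p | p.2.2 ≠ p.1}).toReal

/-- Disagreement probability `P(Y^1 ≠ Y^2)`. -/
noncomputable def d12 (θ : Measure (Bool × Bool × Bool)) : ℝ :=
  (θ {p | p.2.1 ≠ p.2.2}).toReal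

/-- For `K = 2`, costs `c₁ ≥ 0`, `c₂ > 0` with `C₂ − C₁ = c₂ = 1/4`,
and any `0 < ε < 3/8`, there exist two weakly dominant instances `θ, θ'` (joint laws of
`(Y, Y^1, Y^2)` with `γ₂ ≤ γ₁`) such that: (i) in `θ` action 1 is the unique optimal
action with gap `1/4`; (ii) in `θ'` action 2 is the unique optimal action with gap `ε`;
and (iii) the marginal laws of `(Y^1, Y^2)` differ by at most `ε` pointwise.
(For `K = 2`, weak dominance says: if action 1 is optimal then `C₂ − C₁ ≥ P(Y^1 ≠ Y^2)`;
if `a* = 2` the condition is vacuous.) -/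
theorem exists_close_WD_instances_distinct_optima
    (c₁ c₂ : ℝ) (hc₁ : 0 ≤ c₁) (hc₂ : 0 < c₂) (hgap : (c₁ + c₂) - c₁ = 1/4)
    (ε : ℝ) (hε0 : 0 < ε) (hε1 : ε < 3/8) :
    ∃ θ θ' : Measure (Bool × Bool × Bool),
      IsProbabilityMeasure θ ∧ IsProbabilityMeasure θ' ∧
      -- valid instances: γ₂ ≤ γ₁
      g2 θ ≤ g1 θ ∧ g2 θ' ≤ g1 θ' ∧
      -- both satisfy weak dominance
      (g1 θ + c₁ ≤ g2 θ + (c₁ + c₂) → (c₁ + c₂) - c₁ ≥ d12 θ) ∧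
      (g1 θ' + c₁ ≤ g2 θ' + (c₁ + c₂) → (c₁ + c₂) - c₁ ≥ d12 θ') ∧
      -- (i) in θ, action 1 is the unique optimal action, with action gap 1/4
      g1 θ + c₁ < g2 θ + (c₁ + c₂) ∧
      (g2 θ + (c₁ + c₂)) - (g1 θ + c₁) = 1/4 ∧
      -- (ii) in θ', action 2 is the unique optimal action, with action gap ε
      g2 θ' + (c₁ + c₂) < g1 θ' + c₁ ∧
      (g1 θ' + c₁) - (g2 θ' + (c₁ + c₂)) = ε ∧
      -- (iii) the sensor-output marginals are ε-close pointwise on {0,1}²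
      (∀ a b : Bool,
        |(θ {p | p.2.1 = a ∧ p.2.2 = b}).toReal
          - (θ' {p | p.2.1 = a ∧ p.2.2 = b}).toReal| ≤ ε) := by
  have hc : c₂ = 1/4 := by linarith
  set θ : Measure (Bool × Bool × Bool) :=
    ENNReal.ofReal (1/8) • Measure.dirac (true, true, false)
    + ENNReal.ofReal (1/8) • Measure.dirac (false, true, false)
    + ENNReal.ofReal (3/4) • Measure.dirac (false, false, false) with hθ
  set θ' : Measure (Bool × Bool × Bool) :=
    ENNReal.ofReal (1/4 + ε) • Measure.dirac (false, true, false)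
    + ENNReal.ofReal (3/4 - ε) • Measure.dirac (false, false, false) with hθ'
  have happ : ∀ S : Set (Bool × Bool × Bool),
      θ S = ENNReal.ofReal (1/8) * S.indicator 1 (true, true, false)
        + ENNReal.ofReal (1/8) * S.indicator 1 (false, true, false)
        + ENNReal.ofReal (3/4) * S.indicator 1 (false, false, false) := by
    intro S
    simp [hθ, Measure.add_apply, Measure.smul_apply, Measure.dirac_apply, smul_eq_mul]
  have happ' : ∀ S : Set (Bool × Bool × Bool),
      θ' S = ENNReal.ofReal (1/4 + ε) * S.indicator 1 (false, true, false)
        + ENNReal.ofReal (3/4 - ε) * S.indicator 1 (false, false, false) := by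
    intro S
    simp [hθ', Measure.add_apply, Measure.smul_apply, Measure.dirac_apply, smul_eq_mul]
  -- handy real facts
  have h14 : (0:ℝ) ≤ 1/4 + ε := by linarith
  have h34 : (0:ℝ) ≤ 3/4 - ε := by linarith
  -- a computation tactic: evaluate θ S and θ' S on concrete sets
  have hg1 : g1 θ = 1/8 := by
    rw [g1, happ]
    simp only [Set.indicator_apply, Set.mem_setOf_eq]
    norm_num
  have hg2 : g2 θ = 1/8 := by
    rw [g2, happ]
    simp only [Set.indicator_apply, Set.mem_setOf_eq]
    norm_num
  have hd : d12 θ = 1/4 := by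
    rw [d12, happ]
    simp only [Set.indicator_apply, Set.mem_setOf_eq]
    norm_num
    rw [← ENNReal.ofReal_add (by norm_num) (by norm_num)]
    rw [ENNReal.toReal_ofReal (by norm_num)]
    norm_num
  have hg1' : g1 θ' = 1/4 + ε := by
    rw [g1, happ']
    simp only [Set.indicator_apply, Set.mem_setOf_eq]
    norm_num
    exact h14
  have hg2' : g2 θ' = 0 := by
    rw [g2, happ']
    simp only [Set.indicator_apply, Set.mem_setOf_eq]
    norm_num
  have hP : IsProbabilityMeasure θ := by
    constructor
    rw [happ]
    simp only [Set.indicator_apply, Set.mem_univ, if_pos, Pi.one_apply, mul_one]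
    rw [← ENNReal.ofReal_add (by norm_num) (by norm_num),
        ← ENNReal.ofReal_add (by norm_num) (by norm_num)]
    norm_num
  have hP' : IsProbabilityMeasure θ' := by
    constructor
    rw [happ']
    simp only [Set.indicator_apply, Set.mem_univ, if_pos, Pi.one_apply, mul_one]
    rw [← ENNReal.ofReal_add h14 h34]
    norm_num
  have A1 : (θ {p | p.2.1 = false ∧ p.2.2 = false}).toReal = 3/4 := by
    rw [happ]
    simp only [Set.indicator_apply, Set.mem_setOf_eq]
    norm_num
  have A2 : (θ {p | p.2.1 = true ∧ p.2.2 = false}).toReal = 1/4 := by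
    rw [happ]
    simp only [Set.indicator_apply, Set.mem_setOf_eq]
    norm_num
    rw [← ENNReal.ofReal_add (by norm_num) (by norm_num),
      ENNReal.toReal_ofReal (by norm_num)]
    norm_num
  have A3 : (θ {p | p.2.1 = false ∧ p.2.2 = true}).toReal = 0 := by
    rw [happ]
    simp only [Set.indicator_apply, Set.mem_setOf_eq]
    norm_num
  have A4 : (θ {p | p.2.1 = true ∧ p.2.2 = true}).toReal = 0 := by
    rw [happ]
    simp only [Set.indicator_apply, Set.mem_setOf_eq]
    norm_num
  have B1 : (θ' {p | p.2.1 = false ∧ p.2.2 = false}).toReal = 3/4 - ε := by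
    rw [happ']
    simp only [Set.indicator_apply, Set.mem_setOf_eq]
    norm_num
    linarith
  have B2 : (θ' {p | p.2.1 = true ∧ p.2.2 = false}).toReal = 1/4 + ε := by
    rw [happ']
    simp only [Set.indicator_apply, Set.mem_setOf_eq]
    norm_num
    exact h14
  have B3 : (θ' {p | p.2.1 = false ∧ p.2.2 = true}).toReal = 0 := by
    rw [happ']
    simp only [Set.indicator_apply, Set.mem_setOf_eq]
    norm_num
  have B4 : (θ' {p | p.2.1 = true ∧ p.2.2 = true}).toReal = 0 := by
    rw [happ']
    simp only [Set.indicator_apply, Set.mem_setOf_eq]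
    norm_num
  have hm : ∀ a b : Bool,
      |(θ {p | p.2.1 = a ∧ p.2.2 = b}).toReal
          - (θ' {p | p.2.1 = a ∧ p.2.2 = b}).toReal| ≤ ε := by
    intro a b
    rcases a <;> rcases b
    · rw [A1, B1]; rw [abs_of_nonneg (by linarith)]; linarith
    · rw [A3, B3]; simpa using hε0.le
    · rw [A2, B2]; rw [abs_of_nonpos (by linarith)]; linarith
    · rw [A4, B4]; simpa using hε0.le
  refine ⟨θ, θ', hP, hP', ?_, ?_, ?_, ?_, ?_, ?_, ?_, ?_, hm⟩
  · rw [hg1, hg2]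
  · rw [hg1', hg2']; linarith
  · intro _; rw [hd, hgap]
  · intro h; exfalso; rw [hg1', hg2'] at h; linarith
  · rw [hg1, hg2]; linarith
  · rw [hg1, hg2]; linarith
  · rw [hg1', hg2']; linarith
  · rw [hg1', hg2']; linarith
end

section
/- Let K = 2 with costs c_1 ≥ 0 and 0 < c_2 < 1. Let Y be Bernoulli(1/2), let Y^1 be a {0,1}-valued random variable independent of Y, and set Y^2 = 1 − Y^1. Then γ_1 = γ_2 = 1/2 and P(Y^1 ≠ Y^2) = 1; the resulting instance is a valid cascaded sensor selection instance whose smallest optimal action is a* = 1; the instance does not satisfy weak dominance; yet a_wd is defined at its sensor-output law, with index 2 (and no other index) satisfying conditions (wd1)–(wd2), so a_wd returns 2 ≠ a*. -/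
open MeasureTheory ProbabilityTheory

lemma half_aux : (1:ENNReal) - 1/2 = 1/2 := by
  rw [one_div, ENNReal.one_sub_inv_two]

lemma gamma1_half {Ω : Type} [MeasurableSpace Ω] (μ : Measure Ω) [IsProbabilityMeasure μ]
    (Y Y1 : Ω → Bool) (hY : Measurable Y) (hY1 : Measurable Y1)
    (hBer : μ {ω | Y ω = true} = 1/2)
    (hindep : IndepFun Y Y1 μ) :
    μ {ω | Y1 ω ≠ Y ω} = 1/2 := by
  have hYt : μ (Y ⁻¹' {true}) = 1/2 := hBer
  have hYf : μ (Y ⁻¹' {false}) = 1/2 := by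
    have h : Y ⁻¹' {false} = (Y ⁻¹' {true})ᶜ := by
      ext ω; cases h : Y ω <;> simp [h]
    rw [h, measure_compl (hY (MeasurableSet.singleton true)) (measure_ne_top μ _), hYt,
      measure_univ, half_aux]
  have hset : {ω | Y1 ω ≠ Y ω}
      = (Y ⁻¹' {false} ∩ Y1 ⁻¹' {true}) ∪ (Y ⁻¹' {true} ∩ Y1 ⁻¹' {false}) := by
    ext ω; cases h : Y ω <;> cases h1 : Y1 ω <;> simp [h, h1]
  have hm1 := hindep.measure_inter_preimage_eq_mul {false} {true}
    (MeasurableSet.singleton false) (MeasurableSet.singleton true)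
  have hm2 := hindep.measure_inter_preimage_eq_mul {true} {false}
    (MeasurableSet.singleton true) (MeasurableSet.singleton false)
  have hdisj : Disjoint (Y ⁻¹' {false} ∩ Y1 ⁻¹' {true}) (Y ⁻¹' {true} ∩ Y1 ⁻¹' {false}) := by
    rw [Set.disjoint_left]
    rintro ω ⟨h1, _⟩ ⟨h2, _⟩
    simp_all
  have hsum : μ (Y1 ⁻¹' {true}) + μ (Y1 ⁻¹' {false}) = 1 := by
    have hd : Disjoint (Y1 ⁻¹' {true}) (Y1 ⁻¹' {false}) := by
      rw [Set.disjoint_left]; intro ω h1 h2; simp_all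
    have hu : (Y1 ⁻¹' {true}) ∪ (Y1 ⁻¹' {false}) = Set.univ := by
      ext ω; cases h : Y1 ω <;> simp [h]
    rw [← measure_union hd (hY1 (MeasurableSet.singleton false)), hu, measure_univ]
  rw [hset, measure_union hdisj ((hY (MeasurableSet.singleton true)).inter
      (hY1 (MeasurableSet.singleton false))), hm1, hm2, hYt, hYf, ← mul_add, hsum, mul_one]

/-- Let `K = 2`, `c₁ ≥ 0`, `0 < c₂ < 1`. Let `Y` be Bernoulli(1/2),
`Y^1` independent of `Y`, and `Y^2 = 1 − Y^1`. Then `γ₁ = γ₂ = 1/2` and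
`P(Y^1 ≠ Y^2) = 1`; the instance is valid (`γ₂ ≤ γ₁`) with smallest optimal action
`a* = 1` (action 1 is strictly better than action 2); weak dominance fails
(`C₂ − C₁ < P(Y^1 ≠ Y^2)`); yet index 2 satisfies (wd1)–(wd2) (its (wd2) part is
vacuous) while index 1 does not (its (wd2) part fails), so `a_wd` is defined and
returns `2 ≠ a* = 1`. -/
theorem awd_defined_outside_WD_example
    {Ω : Type} [MeasurableSpace Ω] (μ : Measure Ω) [IsProbabilityMeasure μ]
    (c₁ c₂ : ℝ) (hc₁ : 0 ≤ c₁) (hc₂0 : 0 < c₂) (hc₂1 : c₂ < 1)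
    (Y Y1 Y2 : Ω → Bool) (hY : Measurable Y) (hY1 : Measurable Y1)
    (hBer : μ {ω | Y ω = true} = 1/2)
    (hindep : IndepFun Y Y1 μ)
    (hY2 : ∀ ω, Y2 ω = !(Y1 ω)) :
    -- γ₁ = 1/2, γ₂ = 1/2, P(Y^1 ≠ Y^2) = 1
    (μ {ω | Y1 ω ≠ Y ω}).toReal = 1/2 ∧
    (μ {ω | Y2 ω ≠ Y ω}).toReal = 1/2 ∧
    (μ {ω | Y1 ω ≠ Y2 ω}).toReal = 1 ∧
    -- the instance is a valid cascaded sensor selection instance: γ₂ ≤ γ₁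
    (μ {ω | Y2 ω ≠ Y ω}).toReal ≤ (μ {ω | Y1 ω ≠ Y ω}).toReal ∧
    -- the smallest optimal action is a* = 1 (action 1 is strictly cheaper)
    (μ {ω | Y1 ω ≠ Y ω}).toReal + c₁ < (μ {ω | Y2 ω ≠ Y ω}).toReal + (c₁ + c₂) ∧
    -- weak dominance fails at a* = 1: ¬(C₂ − C₁ ≥ P(Y^1 ≠ Y^2))
    ¬((c₁ + c₂) - c₁ ≥ (μ {ω | Y1 ω ≠ Y2 ω}).toReal) ∧
    -- index 2 satisfies (wd1) (and (wd2) is vacuous): C₂ − C₁ < P(Y^2 ≠ Y^1)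
    (c₁ + c₂) - c₁ < (μ {ω | Y2 ω ≠ Y1 ω}).toReal ∧
    -- index 1 does not satisfy (wd2): ¬(C₂ − C₁ ≥ P(Y^1 ≠ Y^2)), so a_wd returns 2 ≠ 1
    ¬((c₁ + c₂) - c₁ ≥ (μ {ω | Y1 ω ≠ Y2 ω}).toReal) := by
  have h1 : μ {ω | Y1 ω ≠ Y ω} = 1/2 := gamma1_half μ Y Y1 hY hY1 hBer hindep
  have hmne : MeasurableSet {ω | Y1 ω ≠ Y ω} := by
    have : {ω | Y1 ω ≠ Y ω} = (Y ⁻¹' {false} ∩ Y1 ⁻¹' {true}) ∪ (Y ⁻¹' {true} ∩ Y1 ⁻¹' {false}) := by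
      ext ω; cases h : Y ω <;> cases h1 : Y1 ω <;> simp [h, h1]
    rw [this]
    exact ((hY (MeasurableSet.singleton false)).inter (hY1 (MeasurableSet.singleton true))).union
      ((hY (MeasurableSet.singleton true)).inter (hY1 (MeasurableSet.singleton false)))
  have h2 : μ {ω | Y2 ω ≠ Y ω} = 1/2 := by
    have hs : {ω | Y2 ω ≠ Y ω} = {ω | Y1 ω ≠ Y ω}ᶜ := by
      ext ω; rw [Set.mem_compl_iff]; simp only [Set.mem_setOf_eq, hY2 ω]
      cases h : Y1 ω <;> cases h' : Y ω <;> simp [h, h']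
    rw [hs, measure_compl hmne (measure_ne_top μ _), h1, measure_univ, half_aux]
  have h3 : μ {ω | Y1 ω ≠ Y2 ω} = 1 := by
    have : {ω | Y1 ω ≠ Y2 ω} = Set.univ := by
      ext ω; simp only [Set.mem_setOf_eq, hY2 ω]; cases Y1 ω <;> simp
    rw [this, measure_univ]
  have h4 : μ {ω | Y2 ω ≠ Y1 ω} = 1 := by
    have : {ω | Y2 ω ≠ Y1 ω} = Set.univ := by
      ext ω; simp only [Set.mem_setOf_eq, hY2 ω]; cases Y1 ω <;> simp
    rw [this, measure_univ]
  rw [h1, h2, h3, h4]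
  have ht : ((1:ENNReal)/2).toReal = 1/2 := by norm_num
  have ht1 : ((1:ENNReal)).toReal = 1 := rfl
  rw [ht, ht1]
  exact ⟨rfl, rfl, rfl, le_refl _, by linarith, fun h => by linarith, by linarith,
    fun h => by linarith⟩
end
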